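/- arXiv:2405.09051 — 4 statements merged into one kernel-verified Lean document; each statement's English description precedes it below -/
import Mathlib

section
/- The weight vector nt = (1-ε,...,1-ε, (1+ε)/(n-d-1),...,(1+ε)/(n-d-1)) ∈ ℚ^n (with d+1 copies of 1-ε and n-d-1 copies of (1+ε)/(n-d-1), 0 < ε ≪ 1) lies exactly on the walls x_i + x_{d+2} + ... + x_n = 2 for i ∈ {1,...,d+1}, and on no other wall x_I = k with 2 ≤ |I| ≤ n-2, 1 ≤ k ≤ d. -/
set_option maxHeartbeats 1000000


/-- The weight vector `nt` with `d+1` coordinates `1-ε` and `n-d-1` coordinates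
`(1+ε)/(n-d-1)`. -/
def ntvec (d n : ℕ) (ε : ℚ) : Fin n → ℚ :=
  fun i => if (i : ℕ) < d + 1 then 1 - ε else (1 + ε) / ((n : ℚ) - d - 1)

lemma card_filter_lt_univ (n m : ℕ) (h : m ≤ n) :
    (Finset.univ.filter (fun i : Fin n => (i:ℕ) < m)).card = m := by
  have : (Finset.univ : Finset (Fin m)).map (Fin.castLEEmb h) =
      Finset.univ.filter (fun i : Fin n => (i:ℕ) < m) := by
    ext i
    simp [Fin.exists_iff, Fin.castLEEmb, Fin.ext_iff]
  rw [← this, Finset.card_map, Finset.card_univ, Fintype.card_fin]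

lemma int_eq_zero_of_abs_cast_lt_one (X : ℤ) (h : |(X : ℚ)| < 1) : X = 0 := by
  have h' : |X| < 1 := by exact_mod_cast h
  rcases abs_lt.mp h' with ⟨h1, h2⟩
  omega

/-- For `0 < ε` sufficiently small, the weight vector `nt` lies exactly on
the walls `x_i + x_{d+2} + … + x_n = 2` for `i ∈ {1,…,d+1}`, and on no other wall
`x_I = k` with `2 ≤ |I| ≤ n-2`, `1 ≤ k ≤ d`. -/
theorem stmt1 (d n : ℕ) (hd : 1 ≤ d) (hn : d + 3 ≤ n) :
    ∃ ε₀ : ℚ, 0 < ε₀ ∧ ∀ ε : ℚ, 0 < ε → ε < ε₀ →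
      ∀ I : Finset (Fin n), ∀ k : ℕ, 2 ≤ I.card → I.card ≤ n - 2 → 1 ≤ k → k ≤ d →
        (∑ i ∈ I, ntvec d n ε i = (k : ℚ) ↔
          (k = 2 ∧ ∃ j : Fin n, (j : ℕ) < d + 1 ∧
            I = insert j (Finset.univ.filter (fun i : Fin n => d + 1 ≤ (i : ℕ))))) := by
  set M : ℕ := n - (d + 1) with hM
  have hM2 : 2 ≤ M := by omega
  have hdn : d + 1 ≤ n := by omega
  have hMq : ((n : ℚ) - d - 1) = (M : ℚ) := by
    rw [hM, Nat.cast_sub hdn]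
    push_cast
    ring
  have hMq0 : (0 : ℚ) < (M : ℚ) := by exact_mod_cast (by omega : 0 < M)
  have hMne : (M : ℚ) ≠ 0 := ne_of_gt hMq0
  -- cardinality of the "high" part of univ
  have hlowcard : (Finset.univ.filter (fun i : Fin n => (i:ℕ) < d + 1)).card = d + 1 :=
    card_filter_lt_univ n (d+1) hdn
  have hsplit := Finset.card_filter_add_card_filter_not
      (s := (Finset.univ : Finset (Fin n))) (p := fun i : Fin n => (i:ℕ) < d + 1)
  rw [Finset.card_univ, Fintype.card_fin, hlowcard] at hsplit
  have hhighcard : (Finset.univ.filter (fun i : Fin n => ¬ (i:ℕ) < d + 1)).card = M := by omega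
  refine ⟨1 / ((M : ℚ) * (d + 2)), by positivity, ?_⟩
  intro ε hε hεlt I k hc2 hcn hk1 hkd
  set a : ℕ := (I.filter (fun i : Fin n => (i:ℕ) < d + 1)).card with had
  set b : ℕ := (I.filter (fun i : Fin n => ¬ (i:ℕ) < d + 1)).card with hbd
  have hab : a + b = I.card :=
    Finset.card_filter_add_card_filter_not (p := fun i : Fin n => (i:ℕ) < d + 1)
  have ha : a ≤ d + 1 := by
    calc a ≤ (Finset.univ.filter (fun i : Fin n => (i:ℕ) < d + 1)).card :=
          Finset.card_le_card (Finset.filter_subset_filter _ (Finset.subset_univ I))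
      _ = d + 1 := hlowcard
  have hb : b ≤ M := by
    calc b ≤ (Finset.univ.filter (fun i : Fin n => ¬ (i:ℕ) < d + 1)).card :=
          Finset.card_le_card (Finset.filter_subset_filter _ (Finset.subset_univ I))
      _ = M := hhighcard
  -- the sum in terms of a and b
  have hsum : ∑ i ∈ I, ntvec d n ε i = a * (1 - ε) + b * ((1 + ε) / M) := by
    rw [← Finset.sum_filter_add_sum_filter_not I (fun i : Fin n => (i:ℕ) < d + 1)]
    congr 1
    · rw [Finset.sum_congr rfl (fun i hi => ?_), Finset.sum_const, nsmul_eq_mul]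
      rw [ntvec, if_pos (Finset.mem_filter.mp hi).2]
    · rw [Finset.sum_congr rfl (fun i hi => ?_), Finset.sum_const, nsmul_eq_mul]
      rw [ntvec, if_neg (Finset.mem_filter.mp hi).2, hMq]
  -- the key arithmetic equivalence
  have key : (a : ℚ) * (1 - ε) + b * ((1 + ε) / M) = k ↔ (b = a * M ∧ k = 2 * a) := by
    constructor
    · intro h
      field_simp at h
      have heq : (a : ℚ) * M + b - k * M = ε * ((a : ℚ) * M - b) := by linear_combination h
      by_cases hq : (a : ℚ) * M - b = 0
      · have hba : b = a * M := by
          have : (b : ℚ) = ((a * M : ℕ) : ℚ) := by push_cast; linarith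
          exact_mod_cast this
        refine ⟨hba, ?_⟩
        rw [hq, mul_zero] at heq
        have hkq : (k : ℚ) * M = (2 * a : ℚ) * M := by nlinarith [hq]
        have : (k : ℚ) = ((2 * a : ℕ) : ℚ) := by
          push_cast
          exact mul_right_cancel₀ hMne hkq
        exact_mod_cast this
      · exfalso
        have haq : (a : ℚ) ≤ (d : ℚ) + 1 := by exact_mod_cast ha
        have hbq : (b : ℚ) ≤ (M : ℚ) := by exact_mod_cast hb
        have haq0 : (0 : ℚ) ≤ (a : ℚ) := Nat.cast_nonneg a
        have hbq0 : (0 : ℚ) ≤ (b : ℚ) := Nat.cast_nonneg b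
        have hm1 : (a : ℚ) * M ≤ ((d : ℚ) + 1) * M :=
          mul_le_mul_of_nonneg_right haq (le_of_lt hMq0)
        have hm2 : (0 : ℚ) ≤ (M : ℚ) * ((d : ℚ) + 1) := by positivity
        have h1 : |(a : ℚ) * M - b| ≤ (M : ℚ) * (d + 2) := by
          rw [abs_sub_le_iff]
          constructor <;> nlinarith [hm1, hm2, hbq0, hbq, hMq0]
        have h2 : |(a : ℚ) * M + b - k * M| < 1 := by
          rw [heq, abs_mul, abs_of_pos hε]
          calc ε * |(a : ℚ) * M - b| ≤ ε * ((M : ℚ) * (d + 2)) :=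
                mul_le_mul_of_nonneg_left h1 (le_of_lt hε)
            _ < (1 / ((M : ℚ) * (d + 2))) * ((M : ℚ) * (d + 2)) := by
                apply mul_lt_mul_of_pos_right hεlt; positivity
            _ = 1 := by field_simp
        have h3 : (((a * M + b : ℤ) - (k * M : ℤ) : ℤ) : ℚ) = (a : ℚ) * M + b - k * M := by
          push_cast; ring
        have h4 : ((a * M + b : ℤ) - (k * M : ℤ) : ℤ) = 0 :=
          int_eq_zero_of_abs_cast_lt_one _ (by rw [h3]; exact h2)
        have h5 : (a : ℚ) * M + b - k * M = 0 := by rw [← h3, h4, Int.cast_zero]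
        rw [h5] at heq
        exact hq (by rcases mul_eq_zero.mp heq.symm with h' | h'
                     · exact absurd h' (ne_of_gt hε)
                     · exact h')
    · rintro ⟨hba, hka⟩
      rw [hba, hka]
      push_cast
      field_simp
      ring
  rw [hsum, key]
  constructor
  · rintro ⟨hba, hka⟩
    have ha1' : a ≤ 1 := by
      by_contra hcon
      push_neg at hcon
      have : 2 * M ≤ a * M := Nat.mul_le_mul_right M hcon
      omega
    have ha1 : a = 1 := by
      rcases Nat.eq_zero_or_pos a with h0 | h0
      · rw [h0, zero_mul] at hba; omega
      · omega
    rw [ha1, one_mul] at hba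
    refine ⟨by omega, ?_⟩
    obtain ⟨j, hj⟩ := Finset.card_eq_one.mp (show
      (I.filter (fun i : Fin n => (i:ℕ) < d + 1)).card = 1 by rw [← had]; exact ha1)
    have hjmem : j ∈ I.filter (fun i : Fin n => (i:ℕ) < d + 1) := by
      rw [hj]; exact Finset.mem_singleton_self j
    have hjlt : (j : ℕ) < d + 1 := (Finset.mem_filter.mp hjmem).2
    refine ⟨j, hjlt, ?_⟩
    have hhigh : I.filter (fun i : Fin n => ¬ (i:ℕ) < d + 1) =
        Finset.univ.filter (fun i : Fin n => ¬ (i:ℕ) < d + 1) := by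
      apply Finset.eq_of_subset_of_card_le
        (Finset.filter_subset_filter _ (Finset.subset_univ I))
      rw [hhighcard, ← hbd]
      omega
    have hIeq : I = I.filter (fun i : Fin n => (i:ℕ) < d + 1) ∪
        I.filter (fun i : Fin n => ¬ (i:ℕ) < d + 1) :=
      (Finset.filter_union_filter_not_eq _ I).symm
    rw [hIeq, hj, hhigh, ← Finset.insert_eq]
    congr 1
    apply Finset.filter_congr
    intro i _
    simp [not_lt]
  · rintro ⟨hk2, j, hjlt, hIeq⟩
    have hHeq : Finset.univ.filter (fun i : Fin n => d + 1 ≤ (i : ℕ)) =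
        Finset.univ.filter (fun i : Fin n => ¬ (i:ℕ) < d + 1) := by
      apply Finset.filter_congr; intro i _; simp [not_lt]
    have hfl : I.filter (fun i : Fin n => (i:ℕ) < d + 1) = {j} := by
      rw [hIeq, Finset.filter_insert, if_pos hjlt, hHeq, Finset.filter_filter]
      have : Finset.univ.filter (fun i : Fin n => ¬ (i:ℕ) < d + 1 ∧ (i:ℕ) < d + 1) = ∅ := by
        rw [Finset.filter_eq_empty_iff]
        intro i _
        omega
      rw [this]
      rfl
    have hfh : I.filter (fun i : Fin n => ¬ (i:ℕ) < d + 1) =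
        Finset.univ.filter (fun i : Fin n => ¬ (i:ℕ) < d + 1) := by
      rw [hIeq, Finset.filter_insert, if_neg (not_not_intro hjlt), hHeq, Finset.filter_filter]
      apply Finset.filter_congr
      intro i _
      simp
    have haa : a = 1 := by rw [had, hfl, Finset.card_singleton]
    have hbb : b = M := by rw [hbd, hfh, hhighcard]
    exact ⟨by rw [haa, hbb, one_mul], by omega⟩
end

section
/- Let t = (1,...,1,ε,...,ε) and nt = (1-ε,...,1-ε,(1+ε)/(n-d-1),...,(1+ε)/(n-d-1)) in ℚ^n be as above, with 0 < ε sufficiently small. The unique wall x_I = k (with I ⊆ {1,...,n}, 2 ≤ |I| ≤ n-2, 1 ≤ k ≤ d) that separates t from nt (i.e., intersects the relative interior of the segment joining them) is the wall x_{d+2} + ... + x_n = 1, i.e., I = {d+2,...,n} and k = 1. -/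
def tvec (d n : ℕ) (ε : ℚ) : Fin n → ℚ := fun i => if (i : ℕ) < d + 1 then 1 else ε

/-!
If `I` contains `a` of the first `d + 1` coordinates and `b` of the remaining `m = n - d - 1`,
then `x_I(t) = a + bε` and `x_I(nt) = a(1 - ε) + b(1 + ε)/m` (the `tSum` and `ntSum` below).
For small `ε` both lie on the same side of `k` when `a ≥ k`. When `a < k`, `x_I(t) < k`, and
`x_I(nt) < k` as well unless `b = m`; then `x_I(nt) - k = (a + 1 - k) + (1 - a)ε`, which is
positive only for `a = 0` and `k = 1`.
-/

open Finset

lemma Finset.sum_ite_const {ι M : Type*} [AddCommMonoid M] (s : Finset ι) (p : ι → Prop)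
    [DecidablePred p] (x y : M) :
    ∑ i ∈ s, (if p i then x else y) = #{i ∈ s | p i} • x + #{i ∈ s | ¬ p i} • y := by
  simp [Finset.sum_ite]

lemma Finset.eq_filter_univ_iff_card {α : Type*} [Fintype α] (p : α → Prop) [DecidablePred p]
    (I : Finset α) :
    I = univ.filter p ↔ #{i ∈ I | ¬ p i} = 0 ∧ #{i ∈ I | p i} = #{i | p i} := by
  constructor
  · rintro rfl
    simp [filter_filter]
  · rintro ⟨hnot, hp⟩
    have hI : I.filter p = I := filter_true_of_mem fun i hi => by
      by_contra h
      exact card_ne_zero.mpr ⟨i, mem_filter.mpr ⟨hi, h⟩⟩ hnot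
    rw [← hI]
    exact eq_of_subset_of_card_le (filter_subset_filter p (subset_univ I)) hp.ge

lemma Fin.card_filter_le_val (d n : ℕ) : #{i : Fin n | d ≤ (i : ℕ)} = n - d := by
  have := card_filter_add_card_filter_not (s := (univ : Finset (Fin n))) (fun i : Fin n => i < d)
  simp only [not_lt, Fin.card_filter_val_lt, card_univ, Fintype.card_fin] at this
  omega

section WallSeparation

variable {a b k m : ℕ} {ε : ℚ}

lemma lt_tSum_and_lt_ntSum_of_lt (hka : k < a) (hε : 0 < ε) (hεa : ε * a < 1) :
    (k : ℚ) < a + b * ε ∧ (k : ℚ) < a * (1 - ε) + b * (1 + ε) / m := by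
  have hka' : (k : ℚ) + 1 ≤ a := by exact_mod_cast hka
  have hq : 0 ≤ (b : ℚ) * (1 + ε) / m := by positivity
  constructor <;> nlinarith

lemma tSum_lt_of_lt (hak : a < k) (hbm : b ≤ m) (hε : 0 < ε) (hεm : ε * m < 1) :
    (a : ℚ) + b * ε < k := by
  have hak' : (a : ℚ) + 1 ≤ k := by exact_mod_cast hak
  have hbm' : (b : ℚ) ≤ m := by exact_mod_cast hbm
  nlinarith

lemma separation_nonneg_of_eq (hm : 0 < m) (hε : 0 < ε) (hεkm : ε * (k * m) < 1) :
    0 ≤ ((k : ℚ) + b * ε - k) * (k * (1 - ε) + b * (1 + ε) / m - k) := by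
  rcases Nat.eq_zero_or_pos b with rfl | hb
  · simp
  have hm' : (0 : ℚ) < m := by exact_mod_cast hm
  have hb' : (1 : ℚ) ≤ b := by exact_mod_cast hb
  have hq : (1 + ε) / m ≤ b * (1 + ε) / m := by
    rw [mul_div_assoc]
    exact le_mul_of_one_le_left (by positivity) hb'
  have hkε : k * ε < (1 + ε) / m := by
    rw [lt_div_iff₀ hm']
    nlinarith
  apply mul_nonneg <;> nlinarith

lemma lt_ntSum_iff_of_lt (hak : a < k) (hm : 0 < m) (hbm : b ≤ m) (hε : 0 < ε)
    (hεm : ε * m < 1) :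
    (k : ℚ) < a * (1 - ε) + b * (1 + ε) / m ↔ a = 0 ∧ b = m ∧ k = 1 := by
  have hm' : (0 : ℚ) < m := by exact_mod_cast hm
  have hak' : (a : ℚ) + 1 ≤ k := by exact_mod_cast hak
  have hε1 : ε < 1 := by
    have : (1 : ℚ) ≤ m := by exact_mod_cast hm
    nlinarith
  set q := (1 + ε) / m with hqdef
  have hqm : q * m = 1 + ε := by
    rw [hqdef]
    field_simp
  have hεq : ε < q := by
    rw [hqdef, lt_div_iff₀ hm']
    linarith
  rw [mul_div_assoc, ← hqdef]
  rcases hbm.lt_or_eq with hbm | rfl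
  · -- `b ≤ m - 1` costs a whole `q`, which outweighs the `ε` gained
    have hbm' : (b : ℚ) + 1 ≤ m := by exact_mod_cast hbm
    constructor
    · intro h
      nlinarith
    · rintro ⟨-, rfl, -⟩
      omega
  · rw [mul_comm (b : ℚ), hqm]
    rcases Nat.eq_zero_or_pos a with rfl | ha
    · simp only [Nat.cast_zero, zero_mul, zero_add, true_and]
      constructor
      · intro h
        have : k < 2 := by exact_mod_cast (by linarith : (k : ℚ) < 2)
        omega
      · rintro rfl
        push_cast
        linarith
    · have ha' : (1 : ℚ) ≤ a := by exact_mod_cast ha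
      constructor
      · intro h
        nlinarith
      · rintro ⟨rfl, -, -⟩
        omega

theorem separation_neg_iff (hm : 0 < m) (hbm : b ≤ m) (hε : 0 < ε)
    (hsmall : ε * ((a + 1) * m) < 1) :
    ((a : ℚ) + b * ε - k) * (a * (1 - ε) + b * (1 + ε) / m - k) < 0 ↔
      a = 0 ∧ b = m ∧ k = 1 := by
  have hm' : (1 : ℚ) ≤ m := by exact_mod_cast hm
  have ha0 : (0 : ℚ) ≤ a := a.cast_nonneg
  have hεm : ε * m < 1 := by nlinarith
  rcases lt_trichotomy a k with hak | rfl | hka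
  · have ht := tSum_lt_of_lt (b := b) hak hbm hε hεm
    rw [← lt_ntSum_iff_of_lt hak hm hbm hε hεm]
    constructor
    · intro h
      by_contra hG
      nlinarith
    · intro h
      exact mul_neg_of_neg_of_pos (by linarith) (by linarith)
  · have := separation_nonneg_of_eq (b := b) hm hε (k := a) (by nlinarith)
    constructor
    · intro h
      linarith
    · rintro ⟨ha, -, hk⟩
      omega
  · obtain ⟨ht, hnt⟩ := lt_tSum_and_lt_ntSum_of_lt (b := b) (m := m) hka hε (by nlinarith)
    constructor
    · intro h
      nlinarith
    · rintro ⟨rfl, -, -⟩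
      omega

end WallSeparation

theorem stmt2_general (d n : ℕ) (hn : d + 3 ≤ n) :
    ∃ ε₀ : ℚ, 0 < ε₀ ∧ ∀ ε : ℚ, 0 < ε → ε < ε₀ →
      ∀ I : Finset (Fin n), ∀ k : ℕ, 2 ≤ I.card → I.card ≤ n - 2 → 1 ≤ k → k ≤ d →
        (((∑ i ∈ I, tvec d n ε i) - (k : ℚ)) * ((∑ i ∈ I, ntvec d n ε i) - (k : ℚ)) < 0 ↔
          (I = Finset.univ.filter (fun i : Fin n => d + 1 ≤ (i : ℕ)) ∧ k = 1)) := by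
  refine ⟨1 / (n + 1) ^ 2, by positivity, fun ε hε hεlt I k _ _ _ _ => ?_⟩
  set a := #(I.filter fun i : Fin n => ¬ d + 1 ≤ (i : ℕ))
  set b := #(I.filter fun i : Fin n => d + 1 ≤ (i : ℕ))
  set m := #{i : Fin n | d + 1 ≤ (i : ℕ)}
  have hm_card : m = n - (d + 1) := Fin.card_filter_le_val _ _
  have hm : (m : ℚ) = n - d - 1 := by
    rw [hm_card, Nat.cast_sub (by omega)]
    push_cast
    ring
  have hsplit (x y : ℚ) : ∑ i ∈ I, (if (i : ℕ) < d + 1 then x else y) = a * x + b * y := by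
    simp only [sum_ite_const, not_lt, not_le, nsmul_eq_mul, a, b]
  have hbm : b ≤ m := card_le_card (filter_subset_filter _ (subset_univ I))
  have hsmall : ε * ((a + 1) * m) < 1 := by
    have ha : a ≤ n := (card_le_univ _).trans_eq (Fintype.card_fin n)
    have hbound : (a + 1) * m ≤ (n + 1) ^ 2 := by rw [sq]; gcongr; omega
    calc ε * ((a + 1) * m) ≤ ε * (n + 1) ^ 2 := by gcongr; exact_mod_cast hbound
      _ < 1 := by rwa [lt_div_iff₀ (by positivity)] at hεlt
  simp only [tvec, ntvec, hsplit, ← hm, mul_one, mul_div_assoc']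
  rw [separation_neg_iff (by omega) hbm hε hsmall, Finset.eq_filter_univ_iff_card, and_assoc]

/-- For `0 < ε` sufficiently small, the unique wall `x_I = k`
(`2 ≤ |I| ≤ n-2`, `1 ≤ k ≤ d`) separating `t` from `nt` (i.e. such that
`x_I(t) - k` and `x_I(nt) - k` have opposite nonzero signs) is the wall
`x_{d+2} + … + x_n = 1`. -/
theorem stmt2 (d n : ℕ) (hd : 1 ≤ d) (hn : d + 3 ≤ n) :
    ∃ ε₀ : ℚ, 0 < ε₀ ∧ ∀ ε : ℚ, 0 < ε → ε < ε₀ →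
      ∀ I : Finset (Fin n), ∀ k : ℕ, 2 ≤ I.card → I.card ≤ n - 2 → 1 ≤ k → k ≤ d →
        (((∑ i ∈ I, tvec d n ε i) - (k : ℚ)) * ((∑ i ∈ I, ntvec d n ε i) - (k : ℚ)) < 0 ↔
          (I = Finset.univ.filter (fun i : Fin n => d + 1 ≤ (i : ℕ)) ∧ k = 1)) :=
  stmt2_general d n hn
end

section
/- Let m_1, m_2, c, n, d be nonnegative integers with n ≥ d+3, 1 ≤ c ≤ d, and let ε be a sufficiently small positive rational. Suppose m_1 + ε·m_2 ≤ c, m_1 ≤ d+1, m_2 ≤ n-d-1, and moreover: it is not the case that (c = 1, m_1 = 0, m_2 = n-d-1) [which corresponds to all light hyperplanes coinciding], and it is not the case that (c = 1 and both m_1 > 0 and m_2 > 0). Then (1-ε)·m_1 + ((1+ε)/(n-d-1))·m_2 ≤ c. -/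
set_option maxHeartbeats 1600000


/-- Numerical core of log canonicity preservation: for `ε` sufficiently
small, if `m₁ + ε m₂ ≤ c` with the two degenerate configurations excluded, then
`(1-ε) m₁ + ((1+ε)/(n-d-1)) m₂ ≤ c`. -/
theorem stmt4 (d n : ℕ) (hd : 1 ≤ d) (hn : d + 3 ≤ n) :
    ∃ ε₀ : ℚ, 0 < ε₀ ∧ ∀ ε : ℚ, 0 < ε → ε < ε₀ →
      ∀ m₁ m₂ c : ℕ, 1 ≤ c → c ≤ d → m₁ ≤ d + 1 → m₂ ≤ n - d - 1 →
        (m₁ : ℚ) + ε * m₂ ≤ (c : ℚ) →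
        ¬(c = 1 ∧ m₁ = 0 ∧ m₂ = n - d - 1) →
        ¬(c = 1 ∧ 0 < m₁ ∧ 0 < m₂) →
        (1 - ε) * m₁ + ((1 + ε) / ((n : ℚ) - d - 1)) * m₂ ≤ (c : ℚ) := by
  have hnQ : (d : ℚ) + 3 ≤ (n : ℚ) := by exact_mod_cast hn
  have hNpos : (0 : ℚ) < (n : ℚ) - d - 1 := by linarith
  have hN2 : (2 : ℚ) ≤ (n : ℚ) - d - 1 := by linarith
  refine ⟨1 / ((n : ℚ) - d - 1), by positivity, ?_⟩
  intro ε hε hεlt m₁ m₂ c hc1 hcd hm1 hm2 hsum hex1 hex2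
  have hεN : ε * ((n : ℚ) - d - 1) < 1 := by
    rw [lt_div_iff₀ hNpos] at hεlt; linarith
  have hcQ : (1 : ℚ) ≤ (c : ℚ) := by exact_mod_cast hc1
  have hm2Q : (m₂ : ℚ) ≤ (n : ℚ) - d - 1 := by
    have : ((m₂ : ℕ) : ℚ) ≤ ((n - d - 1 : ℕ) : ℚ) := by exact_mod_cast hm2
    have hcast : ((n - d - 1 : ℕ) : ℚ) = (n : ℚ) - d - 1 := by
      have h1 : d + 1 ≤ n := by omega
      push_cast [Nat.sub_sub, Nat.cast_sub h1]; ring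
    rwa [hcast] at this
  have hm1nn : (0 : ℚ) ≤ (m₁ : ℚ) := Nat.cast_nonneg _
  have hm2nn : (0 : ℚ) ≤ (m₂ : ℚ) := Nat.cast_nonneg _
  rw [div_mul_eq_mul_div, add_comm, ← le_sub_iff_add_le, div_le_iff₀ hNpos]
  -- goal now: (1+ε)*m₂ ≤ (c - (1-ε)*m₁) * ((n:ℚ)-d-1)
  rcases Nat.eq_zero_or_pos m₂ with h2 | h2
  · subst h2; push_cast
    have hε1 : ε < 1 := by nlinarith
    have hle : (1 - ε) * (m₁ : ℚ) ≤ (c : ℚ) := by push_cast at hsum; nlinarith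
    nlinarith [mul_nonneg (sub_nonneg.2 hle) hNpos.le]
  · rcases Nat.eq_zero_or_pos m₁ with h1 | h1
    · subst h1
      push_cast
      rcases eq_or_lt_of_le hc1 with hc | hc
      · -- c = 1, so m₂ ≤ n - d - 2
        have hne : m₂ ≠ n - d - 1 := by
          intro h; exact hex1 ⟨hc.symm, rfl, h⟩
        have hm2' : m₂ + 1 ≤ n - d - 1 := by omega
        have hm2Q' : (m₂ : ℚ) + 1 ≤ (n : ℚ) - d - 1 := by
          have : ((m₂ + 1 : ℕ) : ℚ) ≤ ((n - d - 1 : ℕ) : ℚ) := by exact_mod_cast hm2'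
          have hcast : ((n - d - 1 : ℕ) : ℚ) = (n : ℚ) - d - 1 := by
            have h1 : d + 1 ≤ n := by omega
            push_cast [Nat.sub_sub, Nat.cast_sub h1]; ring
          push_cast at this; linarith
        have hcQ1 : ((c : ℕ) : ℚ) = 1 := by exact_mod_cast hc.symm
        rw [hcQ1]
        nlinarith
      · have hc2 : (2 : ℚ) ≤ (c : ℚ) := by exact_mod_cast hc
        nlinarith
    · -- m₁, m₂ > 0, so c ≥ 2 and m₁ ≤ c - 1
      have hc2' : c ≠ 1 := fun h => hex2 ⟨h, h1, h2⟩
      have hc2 : (2 : ℚ) ≤ (c : ℚ) := by exact_mod_cast (by omega : 2 ≤ c)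
      have hm2pos : (0 : ℚ) < (m₂ : ℚ) := by exact_mod_cast h2
      have hm1pos : (1 : ℚ) ≤ (m₁ : ℚ) := by
        have h1' : 1 ≤ m₁ := h1
        exact_mod_cast h1'
      have hm1lt : (m₁ : ℚ) < (c : ℚ) := by linarith [mul_pos hε hm2pos]
      have hm1le : (m₁ : ℚ) + 1 ≤ (c : ℚ) := by
        have : m₁ < c := by exact_mod_cast hm1lt
        exact_mod_cast this
      have hεm : ε ≤ ε * (m₁:ℚ) := by nlinarith [mul_le_mul_of_nonneg_left hm1pos hε.le]
      have hA : ε * ((n:ℚ) - d - 1) ≤ ε * (m₁:ℚ) * ((n:ℚ) - d - 1) :=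
        mul_le_mul_of_nonneg_right hεm hNpos.le
      have hB : (1 + ε) * (m₂:ℚ) ≤ (1 + ε) * ((n:ℚ) - d - 1) :=
        mul_le_mul_of_nonneg_left hm2Q (by linarith)
      have hC : ((m₁:ℚ) + 1) * ((n:ℚ) - d - 1) ≤ (c:ℚ) * ((n:ℚ) - d - 1) :=
        mul_le_mul_of_nonneg_right hm1le hNpos.le
      nlinarith [hA, hB, hC]
end

section
/- Consider the one-parameter family of hyperplanes L(t) = V(a₀(t) + a₁(t)x₁ + ... + a_d(t)x_d) in 𝔸^d × Spec ℂ[[t]], where a_i(t) ∈ ℂ[[t]], a₁(0) ≠ 0, and a₀(0) = a₂(0) = ... = a_d(0) = 0. In the blow up of 𝔸^d × Spec ℂ[[t]] along Y = V(x₁, t) (a ℙ¹-bundle over the exceptional divisor E ≅ 𝔸^{d-1} × ℙ¹), the limit of the strict transform of L(t) at t = 0 is the section of E given by [s₀ : s₁] = [K₀ : -a₁(0)], where K₀ = lim_{t→0}(a₀(t)/t + (a₂(t)/t)x₂ + ... + (a_d(t)/t)x_d). In particular, this limiting section depends only on a₁(0) and on the first-order coefficients a₀'(0), a₂'(0), ...,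 a_d'(0). -/
/-! Dividing by `t` and evaluating at `t = 0` reads off the coefficient of `t`, which is linear in
`σ₀` with slope `a₁(0) ≠ 0`. -/

open PowerSeries

namespace PowerSeries

variable {R : Type*} [CommSemiring R]

theorem constantCoeff_eq_coeff_one_of_X_mul_eq {G F : R⟦X⟧} (h : X * G = F) :
    constantCoeff G = coeff 1 F := by
  rw [← h, coeff_succ_X_mul, coeff_zero_eq_constantCoeff_apply]

theorem coeff_one_add_mul_X_mul_C_add_sum (a : ℕ → R⟦X⟧) (σ : R) (s : Finset ℕ) (x : ℕ → R) :
    coeff 1 (a 0 + a 1 * (X * C σ) + ∑ i ∈ s, a i * C (x i)) =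
      coeff 1 (a 0) + ∑ i ∈ s, coeff 1 (a i) * x i + constantCoeff (a 1) * σ := by
  rw [mul_left_comm, map_add, map_add, coeff_succ_X_mul, map_sum]
  simp only [coeff_mul_C, coeff_zero_eq_constantCoeff_apply]
  ring

end PowerSeries

theorem add_mul_eq_zero_iff_eq_neg_div {K : Type*} [Field K] {k a σ : K} (ha : a ≠ 0) :
    k + a * σ = 0 ↔ σ = -k / a := by
  rw [eq_div_iff ha, eq_neg_iff_add_eq_zero, add_comm, mul_comm]

theorem stmt7_general (d : ℕ) (a : ℕ → PowerSeries ℂ)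
    (h1 : constantCoeff (a 1) ≠ 0)
    (x : ℕ → ℂ) (σ₀ K₀ : ℂ)
    (hK₀ : K₀ = coeff 1 (a 0) + ∑ i ∈ Finset.Icc 2 d, coeff 1 (a i) * x i)
    (G : PowerSeries ℂ)
    (hG : PowerSeries.X * G =
      a 0 + a 1 * (PowerSeries.X * PowerSeries.C σ₀) +
        ∑ i ∈ Finset.Icc 2 d, a i * PowerSeries.C (x i)) :
    constantCoeff G = K₀ + constantCoeff (a 1) * σ₀ ∧
    (constantCoeff G = 0 ↔ σ₀ = -K₀ / constantCoeff (a 1)) := by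
  have hG₀ : constantCoeff G = K₀ + constantCoeff (a 1) * σ₀ := by
    rw [constantCoeff_eq_coeff_one_of_X_mul_eq hG, coeff_one_add_mul_X_mul_C_add_sum, hK₀]
  exact ⟨hG₀, hG₀ ▸ add_mul_eq_zero_iff_eq_neg_div h1⟩

/-- In the blow up of `𝔸^d × Spec ℂ[[t]]` along `V(x₁,t)`, in the chart
`σ₀ = s₀/s₁`, substituting `x₁ = t σ₀` into `a₀(t) + a₁(t)x₁ + ⋯ + a_d(t)x_d` and dividing
by `t`, the value at `t = 0` is `K₀ + a₁(0)σ₀` where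
`K₀ = a₀'(0) + a₂'(0)x₂ + ⋯ + a_d'(0)x_d`; it vanishes (i.e. the point lies on the limit
of the strict transform) iff `σ₀ = -K₀/a₁(0)`. In particular the limiting section depends
only on `a₁(0)` and the first-order coefficients of `a₀, a₂, …, a_d`. -/
theorem stmt7 (d : ℕ) (hd : 1 ≤ d) (a : ℕ → PowerSeries ℂ)
    (h1 : constantCoeff (a 1) ≠ 0)
    (h0 : constantCoeff (a 0) = 0)
    (hi : ∀ i, 2 ≤ i → i ≤ d → constantCoeff (a i) = 0)
    (x : ℕ → ℂ) (σ₀ K₀ : ℂ)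
    (hK₀ : K₀ = coeff 1 (a 0) + ∑ i ∈ Finset.Icc 2 d, coeff 1 (a i) * x i)
    (G : PowerSeries ℂ)
    (hG : PowerSeries.X * G =
      a 0 + a 1 * (PowerSeries.X * PowerSeries.C σ₀) +
        ∑ i ∈ Finset.Icc 2 d, a i * PowerSeries.C (x i)) :
    constantCoeff G = K₀ + constantCoeff (a 1) * σ₀ ∧
    (constantCoeff G = 0 ↔ σ₀ = -K₀ / constantCoeff (a 1)) :=
  stmt7_general d a h1 x σ₀ K₀ hK₀ G hG
end
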